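/- Let G be a countable group and A a subgroup of G. Then for every operator T in F(ℓ²(G))·I_{ℂ[A]}, the family (⟨T δ_a, δ_a⟩)_{a∈A} is absolutely summable and ∑_{a∈A} ⟨T δ_a, δ_a⟩ = 0. -/

import Mathlib

noncomputable section

open ComplexConjugate
open scoped ENNReal

local notation "⟪" x ", " y "⟫" => @inner ℂ _ _ x y

/-- ℓ²(G): square summable complex valued functions. -/
abbrev L2 (G : Type) : Type := lp (fun _ : G => ℂ) 2

/-- The standard orthonormal basis vector δ_g of ℓ²(G). -/
def delta {G : Type} (g : G) : L2 G :=
  letI := Classical.decEq G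
  lp.single 2 g 1

theorem memℓp_comp_equiv {G : Type} (e : G ≃ G) (x : L2 G) :
    Memℓp (fun g => x (e g)) 2 := by
  have h2 : (0:ℝ) < (2:ℝ≥0∞).toReal := by norm_num
  rw [memℓp_gen_iff h2]
  have hx : Summable fun i => ‖x i‖ ^ (2:ℝ≥0∞).toReal := (memℓp_gen_iff h2).1 (lp.memℓp x)
  exact (e.summable_iff (f := fun i => ‖x i‖ ^ (2:ℝ≥0∞).toReal)).2 hx

/-- The isometry of ℓ²(G) induced by precomposition with a bijection of G. -/
def lpShift {G : Type} (e : G ≃ G) : L2 G ≃ₗᵢ[ℂ] L2 G where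
  toFun x := ⟨fun g => x (e g), memℓp_comp_equiv e x⟩
  invFun x := ⟨fun g => x (e.symm g), memℓp_comp_equiv e.symm x⟩
  left_inv x := by
    apply Subtype.ext
    funext g
    simp
  right_inv x := by
    apply Subtype.ext
    funext g
    simp
  map_add' x y := by
    apply Subtype.ext
    funext g
    simp only [lp.coeFn_add]
    rfl
  map_smul' c x := by
    apply Subtype.ext
    funext g
    simp [lp.coeFn_smul, Pi.smul_apply]
  norm_map' x := by
    have h2 : (0:ℝ) < (2:ℝ≥0∞).toReal := by norm_num
    rw [lp.norm_eq_tsum_rpow h2, lp.norm_eq_tsum_rpow h2]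
    congr 1
    exact e.tsum_eq (f := fun g => ‖x g‖ ^ (2:ℝ≥0∞).toReal)

/-- Right translation operator R_h : δ_g ↦ δ_{gh}. -/
def Rop {G : Type} [Group G] (h : G) : L2 G →L[ℂ] L2 G :=
  (lpShift (Equiv.mulRight h⁻¹)).toLinearIsometry.toContinuousLinearMap

/-- Left translation operator L_h : δ_g ↦ δ_{hg}. -/
def Lop {G : Type} [Group G] (h : G) : L2 G →L[ℂ] L2 G :=
  (lpShift (Equiv.mulLeft h⁻¹)).toLinearIsometry.toContinuousLinearMap

/-- A bounded operator has finite rank if its range is finite dimensional. -/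
def FiniteRank {G : Type} (T : L2 G →L[ℂ] L2 G) : Prop :=
  FiniteDimensional ℂ ↥(LinearMap.range (T : L2 G →ₗ[ℂ] L2 G))

/-- The right action T·g := R_g ∘ T ∘ R_{g⁻¹} of G on operators. -/
def opAct {G : Type} [Group G] (T : L2 G →L[ℂ] L2 G) (g : G) : L2 G →L[ℂ] L2 G :=
  Rop g ∘L T ∘L Rop g⁻¹

/-- The subspace F(ℓ²(G))·I_{ℂ[H]}: the ℂ-linear span of the operators T - T·h with
T of finite rank and h ∈ H. -/
def FIdeal {G : Type} [Group G] (H : Subgroup G) : Submodule ℂ (L2 G →L[ℂ] L2 G) :=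
  Submodule.span ℂ
    {S | ∃ (T : L2 G →L[ℂ] L2 G) (h : G), FiniteRank T ∧ h ∈ H ∧ S = T - opAct T h}

/-- The trace of a (finite rank) operator on ℓ²(G). -/
def opTrace {G : Type} (T : L2 G →L[ℂ] L2 G) : ℂ :=
  ∑' g : G, ⟪delta g, T (delta g)⟫

/-!
The diagonal of `T·h` along `A` is the diagonal of `T` precomposed with the right translation
`a ↦ a h⁻¹` of `A`. So a generator `T - T·h` has diagonal `f - f ∘ e` for a bijection `e` of
`A`, and such a family sums to `0` as soon as `f` is absolutely summable. For `T` of finite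
rank the diagonal against any orthonormal family `v` is absolutely summable: expanding `T x` in
an orthonormal basis `(b j)` of the range bounds `|⟪v i, T v i⟫|` by
`∑ j |⟪T* b j, v i⟫| |⟪v i, b j⟫|`, which is summable in `i` by Bessel's inequality and
`2ab ≤ a² + b²`. Both properties are linear in `T`, hence pass to the span.
-/

section Orthonormal

variable {𝕜 E ι : Type*} [RCLike 𝕜] [NormedAddCommGroup E] [InnerProductSpace 𝕜 E]
  {v : ι → E}

theorem Orthonormal.summable_norm_inner_mul_norm_inner (hv : Orthonormal 𝕜 v) (x y : E) :
    Summable fun i => ‖inner 𝕜 x (v i)‖ * ‖inner 𝕜 (v i) y‖ := by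
  refine .of_nonneg_of_le (fun i => by positivity) (fun i => ?_)
    (((hv.inner_products_summable x).add (hv.inner_products_summable y)).div_const 2)
  rw [norm_inner_symm x (v i)]
  nlinarith [two_mul_le_add_sq ‖inner 𝕜 (v i) x‖ ‖inner 𝕜 (v i) y‖]

theorem Orthonormal.summable_norm_inner_apply_of_finiteDimensional_range [CompleteSpace E]
    (hv : Orthonormal 𝕜 v) (T : E →L[𝕜] E)
    [FiniteDimensional 𝕜 (LinearMap.range (T : E →ₗ[𝕜] E))] :
    Summable fun i => ‖inner 𝕜 (v i) (T (v i))‖ := by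
  set V := LinearMap.range (T : E →ₗ[𝕜] E)
  let b := stdOrthonormalBasis 𝕜 V
  have hexpand : ∀ x : E, inner 𝕜 x (T x) =
      ∑ j, inner 𝕜 (T.adjoint (b j : E)) x * inner 𝕜 x (b j : E) := by
    intro x
    have hTx : ∑ j, inner 𝕜 (b j : E) (T x) • (b j : E) = T x := by
      simpa using congr_arg ((↑) : V → E) (b.sum_repr' ⟨T x, x, rfl⟩)
    simp_rw [ContinuousLinearMap.adjoint_inner_left]
    conv_lhs => rw [← hTx]
    simp [inner_sum, inner_smul_right]
  refine .of_nonneg_of_le (fun i => norm_nonneg _) (fun i => ?_)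
    (summable_sum (s := .univ) fun j _ =>
      hv.summable_norm_inner_mul_norm_inner (T.adjoint (b j : E)) (b j))
  rw [hexpand]
  refine (norm_sum_le _ _).trans (Finset.sum_le_sum fun j _ => ?_)
  rw [norm_mul, norm_inner_symm (v i)]

end Orthonormal

section SummableTsumZero

variable (ι 𝕜 E : Type*) [NormedField 𝕜] [NormedAddCommGroup E] [NormedSpace 𝕜 E]
  [CompleteSpace E]

def summableTsumZero : Submodule 𝕜 (ι → E) where
  carrier := {f | Summable (‖f ·‖) ∧ ∑' i, f i = 0}
  zero_mem' := by simp [summable_zero]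
  add_mem' := by
    rintro f g ⟨hf, hf0⟩ ⟨hg, hg0⟩
    refine ⟨.of_nonneg_of_le (fun i => norm_nonneg _) (fun i => norm_add_le _ _) (hf.add hg),
      ?_⟩
    simp [hf.of_norm.tsum_add hg.of_norm, hf0, hg0]
  smul_mem' := by
    rintro c f ⟨hf, hf0⟩
    refine ⟨by simpa [norm_smul] using hf.mul_left ‖c‖, ?_⟩
    simp [tsum_const_smul'', hf0]

variable {ι 𝕜 E}

theorem sub_comp_equiv_mem_summableTsumZero {f : ι → E} (hf : Summable (‖f ·‖))
    (e : ι ≃ ι) :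
    f - f ∘ e ∈ summableTsumZero ι 𝕜 E := by
  have hfe : Summable (‖f <| e ·‖) := e.summable_iff.2 hf
  refine ⟨.of_nonneg_of_le (fun i => norm_nonneg _) (fun i => norm_sub_le _ _) (hf.add hfe), ?_⟩
  simp [hf.of_norm.tsum_sub hfe.of_norm, e.tsum_eq]

end SummableTsumZero

section Delta

variable {G : Type}

theorem inner_delta_left (g : G) (x : L2 G) : ⟪delta g, x⟫ = x g := by
  classical
  simp [delta, lp.inner_single_left]

theorem orthonormal_delta : Orthonormal ℂ (delta : G → L2 G) := by
  classical
  rw [orthonormal_iff_ite]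
  intro g k
  rw [inner_delta_left]
  simp [delta, lp.single_apply, Pi.single_apply]

def diagonalOn (s : Set G) : (L2 G →L[ℂ] L2 G) →ₗ[ℂ] (s → ℂ) where
  toFun T g := ⟪delta (g : G), T (delta (g : G))⟫
  map_add' S T := by ext; simp
  map_smul' c T := by ext; simp

theorem summable_norm_diagonalOn (s : Set G) {T : L2 G →L[ℂ] L2 G} (hT : FiniteRank T) :
    Summable (‖diagonalOn s T ·‖) :=
  have : FiniteDimensional ℂ (LinearMap.range (T : L2 G →ₗ[ℂ] L2 G)) := hT
  (orthonormal_delta.comp _ Subtype.val_injective)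
    |>.summable_norm_inner_apply_of_finiteDimensional_range T

variable [Group G]

theorem Rop_apply (h : G) (x : L2 G) (g : G) : Rop h x g = x (g * h⁻¹) := rfl

theorem Rop_delta (h g : G) : Rop h (delta g) = delta (g * h) := by
  classical
  ext k
  simp [Rop_apply, delta, lp.single_apply, Pi.single_apply, mul_inv_eq_iff_eq_mul]

theorem inner_delta_opAct (T : L2 G →L[ℂ] L2 G) (h g : G) :
    ⟪delta g, opAct T h (delta g)⟫ = ⟪delta (g * h⁻¹), T (delta (g * h⁻¹))⟫ := by
  simp [opAct, Rop_delta, inner_delta_left, Rop_apply]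

theorem diagonalOn_sub_opAct_mem_summableTsumZero (A : Subgroup G) {T : L2 G →L[ℂ] L2 G}
    (hT : FiniteRank T) {h : G} (hh : h ∈ A) :
    diagonalOn A (T - opAct T h) ∈ summableTsumZero A ℂ ℂ := by
  have hshift : diagonalOn A (T - opAct T h) =
      diagonalOn A T - diagonalOn A T ∘ Equiv.mulRight (⟨h, hh⟩⁻¹ : A) := by
    ext a
    simp [diagonalOn, inner_delta_opAct]
  rw [hshift]
  exact sub_comp_equiv_mem_summableTsumZero (𝕜 := ℂ) (summable_norm_diagonalOn A hT) _

end Delta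

theorem diagonal_sum_over_subgroup_eq_zero_general
    {G : Type} [Group G] (A : Subgroup G)
    (T : L2 G →L[ℂ] L2 G) (hT : T ∈ FIdeal A) :
    Summable (fun a : A => ‖⟪delta (a : G), T (delta (a : G))⟫‖) ∧
      ∑' a : A, ⟪delta (a : G), T (delta (a : G))⟫ = 0 := by
  have hle : FIdeal A ≤ (summableTsumZero A ℂ ℂ).comap (diagonalOn A) := by
    refine Submodule.span_le.2 ?_
    rintro _ ⟨S, h, hS, hh, rfl⟩
    exact diagonalOn_sub_opAct_mem_summableTsumZero A hS hh
  exact hle hT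

/-- Let `A` be a subgroup of a countable group `G`. For every operator
`T` in `F(ℓ²(G))·I_{ℂ[A]}`, the family `(⟨T δ_a, δ_a⟩)_{a∈A}` is absolutely summable and
`∑_{a∈A} ⟨T δ_a, δ_a⟩ = 0`. -/
theorem diagonal_sum_over_subgroup_eq_zero
    {G : Type} [Group G] [Countable G] (A : Subgroup G)
    (T : L2 G →L[ℂ] L2 G) (hT : T ∈ FIdeal A) :
    Summable (fun a : A => ‖⟪delta (a : G), T (delta (a : G))⟫‖) ∧
      ∑' a : A, ⟪delta (a : G), T (delta (a : G))⟫ = 0 :=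
  diagonal_sum_over_subgroup_eq_zero_general A T hT

end
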